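/- The discriminant Δ of binary cubic forms, as a polynomial of degree 4 on the 4-dimensional space V of binary cubics, spans the space of SL(2,ℂ)-invariant elements of Sym⁴ V*: any degree-4 polynomial P on V with P(g·x) = P(x) for all g ∈ SL(2,ℂ) is a scalar multiple of Δ. -/

import Mathlib

/-!
The diagonal element `diag(2, 1/2)` of `SL(2,ℂ)` scales the coefficients `x₀, x₁, x₂, x₃` of a
cubic by `2⁻³, 2⁻¹, 2, 2³`, so an invariant only involves monomials `x₀ᵃx₁ᵇx₂ᶜx₃ᵉ` of weight
`3a + b = c + 3e`. In degree 4 these are `x₀x₁x₂x₃, x₁²x₂², x₀x₂³, x₁³x₃, x₀²x₃²`. Invariance under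
the two unipotent shears, evaluated at four suitable cubics, gives four linear relations between
their coefficients, which leave only the multiples of `(18, 1, -4, -4, -27)`: the discriminant.
-/

open MvPolynomial

/-- The value of the binary cubic form with coefficient vector `x` at `v`. -/
noncomputable def cubicValC (x : Fin 4 → ℂ) (v : Fin 2 → ℂ) : ℂ :=
  x 0 * v 0 ^ 3 + x 1 * v 0 ^ 2 * v 1 + x 2 * v 0 * v 1 ^ 2 + x 3 * v 1 ^ 3

/-- The discriminant of binary cubic forms as a polynomial in the coefficients. -/
noncomputable def discPoly : MvPolynomial (Fin 4) ℂ :=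
  X 1 ^ 2 * X 2 ^ 2 + 18 * X 0 * X 1 * X 2 * X 3 - 4 * X 0 * X 2 ^ 3
    - 4 * X 1 ^ 3 * X 3 - 27 * X 0 ^ 2 * X 3 ^ 2

namespace MvPolynomial

variable {σ R : Type*} [CommRing R]

theorem coeff_bind₁_C_mul_X (s : σ → R) (p : MvPolynomial σ R) (d : σ →₀ ℕ) :
    coeff d (bind₁ (fun i => C (s i) * X i) p) = (d.prod fun i n => s i ^ n) * coeff d p := by
  classical
  induction p using induction_on' with
  | monomial u a =>
    have : bind₁ (fun i => C (s i) * X i) (monomial u a)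
        = monomial u (a * u.prod fun i n => s i ^ n) := by
      simp only [bind₁_monomial, mul_pow, Finset.prod_mul_distrib, ← map_pow, ← map_prod]
      rw [monomial_eq, C_mul, Finsupp.prod, Finsupp.prod]
      ring
    rw [this, coeff_monomial, coeff_monomial]
    split_ifs with h
    · rw [h, mul_comm]
    · rw [mul_zero]
  | add p q hp hq => rw [map_add, coeff_add, coeff_add, hp, hq, mul_add]

theorem coeff_eq_zero_of_eval_mul_eq [IsDomain R] [Infinite R] {s : σ → R}
    {p : MvPolynomial σ R} (hp : ∀ x, eval (s * x) p = eval x p) {d : σ →₀ ℕ}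
    (hd : (d.prod fun i n => s i ^ n) ≠ 1) : coeff d p = 0 := by
  have hfix : bind₁ (fun i => C (s i) * X i) p = p := funext fun x => by
    rw [← hp x]
    exact (eval₂Hom_bind₁ (RingHom.id R) x _ p).trans (by simp [Pi.mul_def])
  have h := coeff_bind₁_C_mul_X s p d
  rw [hfix] at h
  have : ((d.prod fun i n => s i ^ n) - 1) * coeff d p = 0 := by linear_combination -h
  exact (mul_eq_zero.mp this).resolve_left (sub_ne_zero.mpr hd)

end MvPolynomial

noncomputable def expVec (a b c e : ℕ) : Fin 4 →₀ ℕ :=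
  Finsupp.equivFunOnFinite.symm ![a, b, c, e]

theorem expVec_eta (d : Fin 4 →₀ ℕ) : expVec (d 0) (d 1) (d 2) (d 3) = d := by
  ext i
  fin_cases i <;> rfl

@[simp] theorem expVec_inj {a b c e a' b' c' e' : ℕ} :
    expVec a b c e = expVec a' b' c' e' ↔ a = a' ∧ b = b' ∧ c = c' ∧ e = e' := by
  simp [expVec, Finsupp.equivFunOnFinite.symm.injective.eq_iff]

theorem monomial_expVec (a b c e : ℕ) (r : ℂ) :
    monomial (expVec a b c e) r = C r * (X 0 ^ a * X 1 ^ b * X 2 ^ c * X 3 ^ e) := by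
  rw [monomial_eq, Finsupp.prod_fintype _ _ fun i => pow_zero _, Fin.prod_univ_four]
  rfl

theorem torus_character_ne_one {d : Fin 4 →₀ ℕ} (hd : 3 * d 0 + d 1 ≠ d 2 + 3 * d 3) :
    (d.prod fun i n => (![1 / 8, 1 / 2, 2, 8] : Fin 4 → ℂ) i ^ n) ≠ 1 := by
  rw [Finsupp.prod_fintype _ _ fun i => pow_zero _, Fin.prod_univ_four]
  intro h
  have h2 : ((2 ^ (d 2 + 3 * d 3) : ℕ) : ℂ) = ((2 ^ (3 * d 0 + d 1) : ℕ) : ℂ) := by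
    simp only [Matrix.cons_val, one_div, inv_pow] at h
    push_cast
    simp only [pow_add, pow_mul]
    field_simp at h
    linear_combination h
  exact hd (Nat.pow_right_injective le_rfl (Nat.cast_injective h2)).symm

def IsSL2Invariant (P : MvPolynomial (Fin 4) ℂ) : Prop :=
  ∀ g : Matrix.SpecialLinearGroup (Fin 2) ℂ, ∀ x y : Fin 4 → ℂ,
    (∀ v, cubicValC y v = cubicValC x ((↑(g⁻¹) : Matrix (Fin 2) (Fin 2) ℂ).mulVec v)) →
    eval y P = eval x P

namespace IsSL2Invariant

variable {P : MvPolynomial (Fin 4) ℂ}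

theorem eval_eq (hinv : IsSL2Invariant P) {a b c d : ℂ} (hdet : a * d - b * c = 1)
    {x y : Fin 4 → ℂ}
    (h : ∀ v : Fin 2 → ℂ, cubicValC y v = cubicValC x ![d * v 0 - b * v 1, a * v 1 - c * v 0]) :
    eval y P = eval x P := by
  let g : Matrix.SpecialLinearGroup (Fin 2) ℂ :=
    ⟨!![a, b; c, d], by rw [Matrix.det_fin_two_of, hdet]⟩
  refine hinv g x y fun v => ?_
  have hg : (g : Matrix (Fin 2) (Fin 2) ℂ) = !![a, b; c, d] := rfl
  rw [h, Matrix.SpecialLinearGroup.coe_inv, hg, Matrix.adjugate_fin_two_of]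
  simp only [cubicValC, Matrix.mulVec, dotProduct, Fin.sum_univ_two, Matrix.of_apply,
    Matrix.cons_val', Matrix.cons_val_zero, Matrix.cons_val_one, Matrix.cons_val_fin_one]
  ring

theorem eval_torus (hinv : IsSL2Invariant P) (x : Fin 4 → ℂ) :
    eval (![1 / 8, 1 / 2, 2, 8] * x) P = eval x P :=
  hinv.eval_eq (a := 2) (b := 0) (c := 0) (d := 1 / 2) (by norm_num) fun v => by
    simp only [cubicValC, Pi.mul_apply, Matrix.cons_val_zero, Matrix.cons_val_one, Matrix.cons_val]
    ring

theorem eval_shear_upper (hinv : IsSL2Invariant P) (x : Fin 4 → ℂ) :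
    eval ![x 0, x 1 - 3 * x 0, x 2 - 2 * x 1 + 3 * x 0, x 3 - x 2 + x 1 - x 0] P = eval x P :=
  hinv.eval_eq (a := 1) (b := 1) (c := 0) (d := 1) (by norm_num) fun v => by
    simp only [cubicValC, Matrix.cons_val_zero, Matrix.cons_val_one, Matrix.cons_val]
    ring

theorem eval_shear_lower (hinv : IsSL2Invariant P) (x : Fin 4 → ℂ) :
    eval ![x 0 - x 1 + x 2 - x 3, x 1 - 2 * x 2 + 3 * x 3, x 2 - 3 * x 3, x 3] P = eval x P :=
  hinv.eval_eq (a := 1) (b := 0) (c := 1) (d := 1) (by norm_num) fun v => by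
    simp only [cubicValC, Matrix.cons_val_zero, Matrix.cons_val_one, Matrix.cons_val]
    ring

theorem support_subset (hinv : IsSL2Invariant P) (hP : P.IsHomogeneous 4) :
    P.support ⊆
      {expVec 1 1 1 1, expVec 0 2 2 0, expVec 1 0 3 0, expVec 0 3 0 1, expVec 2 0 0 2} := by
  intro d hd
  have hdeg : d 0 + d 1 + d 2 + d 3 = 4 := by
    by_contra h
    refine mem_support_iff.mp hd (hP.coeff_eq_zero ?_)
    rwa [Finsupp.degree_eq_sum, Fin.sum_univ_four]
  have hweight : 3 * d 0 + d 1 = d 2 + 3 * d 3 := by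
    by_contra h
    exact mem_support_iff.mp hd (coeff_eq_zero_of_eval_mul_eq hinv.eval_torus
      (torus_character_ne_one h))
  rw [← expVec_eta d]
  simp only [Finset.mem_insert, Finset.mem_singleton, expVec_inj]
  omega

theorem eq_sum_weight_zero_monomials (hinv : IsSL2Invariant P) (hP : P.IsHomogeneous 4) :
    P = C (coeff (expVec 1 1 1 1) P) * (X 0 * X 1 * X 2 * X 3)
      + C (coeff (expVec 0 2 2 0) P) * (X 1 ^ 2 * X 2 ^ 2)
      + C (coeff (expVec 1 0 3 0) P) * (X 0 * X 2 ^ 3)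
      + C (coeff (expVec 0 3 0 1) P) * (X 1 ^ 3 * X 3)
      + C (coeff (expVec 2 0 0 2) P) * (X 0 ^ 2 * X 3 ^ 2) := by
  conv_lhs => rw [as_sum P]
  rw [Finset.sum_subset (hinv.support_subset hP) fun d _ hd => by
    rw [notMem_support_iff.mp hd, monomial_zero]]
  rw [Finset.sum_insert (by simp), Finset.sum_insert (by simp), Finset.sum_insert (by simp),
    Finset.sum_insert (by simp), Finset.sum_singleton]
  simp only [monomial_expVec]
  ring

theorem eq_smul_discPoly_of_eq_sum (hinv : IsSL2Invariant P) {a b c d e : ℂ}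
    (h : P = C a * (X 0 * X 1 * X 2 * X 3) + C b * (X 1 ^ 2 * X 2 ^ 2) + C c * (X 0 * X 2 ^ 3)
      + C d * (X 1 ^ 3 * X 3) + C e * (X 0 ^ 2 * X 3 ^ 2)) :
    P = b • discPoly := by
  have e₁ := hinv.eval_shear_upper ![0, 1, 0, 0]
  have e₂ := hinv.eval_shear_lower ![0, 0, 1, 0]
  have e₃ := hinv.eval_shear_upper ![1, 0, 0, 1]
  have e₄ := hinv.eval_shear_upper ![1, 2, 0, 0]
  rw [h] at e₁ e₂ e₃ e₄
  simp only [map_add, map_mul, map_pow, eval_C, eval_X, Matrix.cons_val_zero,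
    Matrix.cons_val_one, Matrix.cons_val_two, Matrix.cons_val_three, Matrix.head_cons,
    Matrix.tail_cons] at e₁ e₂ e₃ e₄
  have hc : c = -4 * b := by linear_combination e₂
  have hd : d = -4 * b := by linear_combination e₁
  have he : e = -27 * b := by linear_combination -e₃ + 27 * hc
  have ha : a = 18 * b := by linear_combination e₄ + hc + hd - he
  rw [h, ha, hc, hd, he, discPoly, smul_eq_C_mul]
  simp only [map_mul, map_neg, map_ofNat]
  ring

end IsSL2Invariant

/-- Multiplicity one for the degree-4 invariant of binary cubics: any homogeneous
degree-4 polynomial on the space of binary cubic forms invariant under the SL(2,ℂ)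
substitution action (`y = g·x` meaning the cubic `y` is `x` composed with `g⁻¹`) is a
scalar multiple of the discriminant `Δ`. -/
theorem degree_four_invariant_is_multiple_of_disc (P : MvPolynomial (Fin 4) ℂ)
    (hP : P.IsHomogeneous 4)
    (hinv : ∀ g : Matrix.SpecialLinearGroup (Fin 2) ℂ, ∀ x y : Fin 4 → ℂ,
      (∀ v, cubicValC y v = cubicValC x ((↑(g⁻¹) : Matrix (Fin 2) (Fin 2) ℂ).mulVec v)) →
      eval y P = eval x P) :
    ∃ c : ℂ, P = c • discPoly :=
  ⟨_, IsSL2Invariant.eq_smul_discPoly_of_eq_sum hinv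
    (IsSL2Invariant.eq_sum_weight_zero_monomials hinv hP)⟩
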